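/- arXiv:2603.29831 — 6 statements merged into one kernel-verified Lean document; each statement's English description precedes it below -/
import Mathlib

section
/- The equation 2 + 4x³ + 3xy² + z³ = 0 has no integer solutions: there do not exist integers x, y, z with 2 + 4x³ + 3xy² + z³ = 0. -/
section Eisenstein

variable {μ : ℂ} (hμ : IsPrimitiveRoot μ 3)

lemma mu_rel (hμ : IsPrimitiveRoot μ 3) : μ^2 + μ + 1 = 0 := by
  have h3 : μ^3 = 1 := hμ.pow_eq_one
  have h1 : μ ≠ 1 := hμ.ne_one (by norm_num)
  have hfac : (μ - 1) * (μ^2 + μ + 1) = 0 := by linear_combination h3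
  rcases mul_eq_zero.mp hfac with h | h
  · exact absurd (sub_eq_zero.mp h) h1
  · exact h

lemma coords_zero (hμ : IsPrimitiveRoot μ 3) {a b : ℤ} (h : (a:ℂ) + (b:ℂ) * μ = 0) :
    a = 0 ∧ b = 0 := by
  have hrel := mu_rel hμ
  have key : ((a^2 - a*b + b^2 : ℤ) : ℂ) = 0 := by
    push_cast
    linear_combination ((a:ℂ) - b - b*μ) * h + (b:ℂ)^2 * hrel
  have key2 : a^2 - a*b + b^2 = 0 := by exact_mod_cast key
  constructor <;> nlinarith [sq_nonneg (2*a - b), sq_nonneg (2*b - a), sq_nonneg (a+b)]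

lemma coords_unique (hμ : IsPrimitiveRoot μ 3) {a b c d : ℤ}
    (h : (a:ℂ) + (b:ℂ) * μ = (c:ℂ) + (d:ℂ) * μ) : a = c ∧ b = d := by
  have h0 : ((a - c : ℤ) : ℂ) + ((b - d : ℤ) : ℂ) * μ = 0 := by push_cast; linear_combination h
  have := coords_zero hμ h0
  omega

lemma adjoin_coords (hμ : IsPrimitiveRoot μ 3) {z : ℂ} (hz : z ∈ Algebra.adjoin ℤ {μ}) :
    ∃ a b : ℤ, z = (a:ℂ) + (b:ℂ) * μ := by
  have hrel := mu_rel hμ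
  induction hz using Algebra.adjoin_induction with
  | mem x hx =>
      rcases Set.mem_singleton_iff.mp hx with rfl
      exact ⟨0, 1, by push_cast; ring⟩
  | algebraMap r => exact ⟨r, 0, by push_cast; simp [algebraMap_int_eq]⟩
  | add x y _ _ hx hy =>
      obtain ⟨a, b, rfl⟩ := hx
      obtain ⟨c, d, rfl⟩ := hy
      exact ⟨a + c, b + d, by push_cast; ring⟩
  | mul x y _ _ hx hy =>
      obtain ⟨a, b, rfl⟩ := hx
      obtain ⟨c, d, rfl⟩ := hy
      exact ⟨a*c - b*d, a*d + b*c - b*d, by push_cast; linear_combination (b:ℂ)*(d:ℂ)*hrel⟩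

end Eisenstein

open Finset

section Pairing

variable {F : Type*} [Fintype F] [DecidableEq F]

lemma sum_even_of_involution (f : F → ℂ) (σ : F → F) (S : Subalgebra ℤ ℂ)
    (hmem : ∀ t, f t ∈ S) (hσσ : ∀ t, σ (σ t) = t) (hfσ : ∀ t, f (σ t) = f t) :
    ∀ s : Finset F, (∀ t ∈ s, σ t ∈ s) → (∀ t ∈ s, σ t ≠ t) →
    ∃ r ∈ S, ∑ t ∈ s, f t = 2 * r := by
  intro s
  induction s using Finset.strongInduction with
  | _ s ih =>
    intro hstab hnofix
    rcases s.eq_empty_or_nonempty with rfl | ⟨a, ha⟩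
    · exact ⟨0, S.zero_mem, by simp⟩
    · have hσa : σ a ∈ s := hstab a ha
      have hne : σ a ≠ a := hnofix a ha
      set s' : Finset F := s \ {a, σ a} with hs'
      have hsub : {a, σ a} ⊆ s := by
        intro t ht
        rcases Finset.mem_insert.mp ht with rfl | ht
        · exact ha
        · rcases Finset.mem_singleton.mp ht with rfl; exact hσa
      have hss : s' ⊂ s := by
        refine Finset.ssubset_iff_of_subset (Finset.sdiff_subset) |>.mpr ⟨a, ha, ?_⟩
        simp [hs']
      have hstab' : ∀ t ∈ s', σ t ∈ s' := by
        intro t ht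
        have hts : t ∈ s := (Finset.mem_sdiff.mp ht).1
        have htn : t ∉ ({a, σ a} : Finset F) := (Finset.mem_sdiff.mp ht).2
        refine Finset.mem_sdiff.mpr ⟨hstab t hts, ?_⟩
        intro hc
        rcases Finset.mem_insert.mp hc with hc | hc
        · apply htn
          have : t = σ a := by rw [← hc, hσσ]
          simp [this]
        · rcases Finset.mem_singleton.mp hc with hc
          apply htn
          have : t = a := by
            have := congrArg σ hc
            rwa [hσσ, hσσ] at this
          simp [this]
      have hnofix' : ∀ t ∈ s', σ t ≠ t := fun t ht => hnofix t (Finset.mem_sdiff.mp ht).1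
      obtain ⟨r, hrS, hr⟩ := ih s' hss hstab' hnofix'
      refine ⟨f a + r, S.add_mem (hmem a) hrS, ?_⟩
      have hsplit : s = s' ∪ {a, σ a} := by
        rw [hs', Finset.sdiff_union_of_subset hsub]
      have hdisj : Disjoint s' ({a, σ a} : Finset F) := Finset.sdiff_disjoint
      rw [hsplit, Finset.sum_union hdisj, hr]
      have hpair : ∑ t ∈ ({a, σ a} : Finset F), f t = f a + f (σ a) := by
        rw [Finset.sum_pair (Ne.symm hne)]
      rw [hpair, hfσ a]
      ring

lemma sum_parity_fixed (f : F → ℂ) (σ : F → F) (S : Subalgebra ℤ ℂ) (c : F)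
    (hmem : ∀ t, f t ∈ S) (hσσ : ∀ t, σ (σ t) = t) (hfσ : ∀ t, f (σ t) = f t)
    (hfix : ∀ t, σ t = t ↔ t = c) :
    ∃ r ∈ S, ∑ t, f t = f c + 2 * r := by
  have hc : c ∈ Finset.univ := Finset.mem_univ c
  rw [← Finset.sum_erase_add _ _ hc]
  obtain ⟨r, hrS, hr⟩ := sum_even_of_involution f σ S hmem hσσ hfσ (Finset.univ.erase c)
    (fun t ht => by
      refine Finset.mem_erase.mpr ⟨?_, Finset.mem_univ _⟩
      intro h
      have hσc : σ c = c := (hfix c).mpr rfl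
      have : t = c := by rw [← hσσ t, h, hσc]
      exact (Finset.mem_erase.mp ht).1 this
      ) (fun t ht => by
      intro hcontra
      exact (Finset.mem_erase.mp ht).1 ((hfix t).mp hcontra))
  rw [hr]; exact ⟨r, hrS, by ring⟩

end Pairing

lemma conj_cube_root {z : ℂ} (hz : z ^ 3 = 1) : (starRingEnd ℂ) z = z ^ 2 := by
  have hz0 : z ≠ 0 := by
    intro h; rw [h] at hz; norm_num at hz
  have h1 : z * (starRingEnd ℂ) z = Complex.normSq z := by
    rw [Complex.mul_conj]
  have hc : ((starRingEnd ℂ) z) ^ 3 = 1 := by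
    rw [← map_pow, hz, map_one]
  have h2 : ((Complex.normSq z : ℂ)) ^ 3 = 1 := by
    rw [← h1, mul_pow, hz, hc, one_mul]
  have h2' : (Complex.normSq z) ^ 3 = 1 := by exact_mod_cast h2
  have h3 : Complex.normSq z = 1 := by
    nlinarith [Complex.normSq_nonneg z, sq_nonneg (Complex.normSq z - 1), sq_nonneg (Complex.normSq z + 1), sq_nonneg (Complex.normSq z)]
  have h4 : z * (starRingEnd ℂ) z = 1 := by rw [h1, h3]; norm_num
  have h5 : z * z ^ 2 = 1 := by rw [← pow_succ']; exact hz
  exact mul_left_cancel₀ hz0 (h4.trans h5.symm)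

section Gauss

theorem gauss_two_cube {p : ℕ} [hp : Fact p.Prime] (hp3 : p % 3 = 1)
    (h2 : ∃ t : ZMod p, t ^ 3 = 2) : ∃ A B : ℤ, (p : ℤ) = A ^ 2 + 27 * B ^ 2 := by
  classical
  have hp5 : 5 ≤ p := by
    have h2p := hp.out.two_le
    have hne4 : p ≠ 4 := fun h => absurd (h ▸ hp.out) (by norm_num)
    omega
  have hpne2 : p ≠ 2 := by omega
  have hpne3 : p ≠ 3 := by omega
  -- the primitive cube root of unity in ℂ
  obtain ⟨μ, hμ⟩ : ∃ μ : ℂ, IsPrimitiveRoot μ 3 :=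
    ⟨_, Complex.isPrimitiveRoot_exp 3 (by norm_num)⟩
  have hrel := mu_rel hμ
  have hcard : Fintype.card (ZMod p) = p := ZMod.card p
  have hdvd : 3 ∣ Fintype.card (ZMod p) - 1 := by
    rw [hcard]; omega
  -- the cubic character
  obtain ⟨χ, hχord⟩ := MulChar.exists_mulChar_orderOf (ZMod p) hdvd hμ
  have hχ3 : χ ^ 3 = 1 := by rw [← hχord]; exact pow_orderOf_eq_one χ
  have hχ1 : χ ≠ 1 := by
    intro h; rw [h, orderOf_one] at hχord; norm_num at hχord
  -- χ 2 = 1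
  obtain ⟨t, ht⟩ := h2
  have h2ne : (2 : ZMod p) ≠ 0 := by
    have : ((2 : ℕ) : ZMod p) ≠ 0 := by
      rw [Ne, ZMod.natCast_eq_zero_iff]
      intro hdvd2
      have := Nat.le_of_dvd (by norm_num) hdvd2
      omega
    exact_mod_cast this
  have htne : t ≠ 0 := by
    intro h; rw [h] at ht; simp at ht; exact h2ne ht.symm
  have hχ2 : χ 2 = 1 := by
    have h1 : χ (t ^ 3) = χ t ^ 3 := by rw [map_pow]
    have h2' : χ t ^ 3 = (χ ^ 3) t := (χ.pow_apply' (by norm_num) t).symm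
    rw [ht] at h1
    rw [h1, h2', hχ3, MulChar.one_apply (isUnit_iff_ne_zero.mpr htne)]
  -- J in coordinates
  set J := jacobiSum χ χ with hJdef
  have hJmem : J ∈ Algebra.adjoin ℤ {μ} :=
    jacobiSum_mem_algebraAdjoin_of_pow_eq_one hχ3 hχ3 hμ
  obtain ⟨a, b, hJab⟩ := adjoin_coords hμ hJmem
  -- divisibility of b by 3
  obtain ⟨z, hzmem, hzeq⟩ :=
    exists_jacobiSum_eq_neg_one_add (by norm_num : (2:ℕ) < 3) hχ3 hχ3 hdvd hμ
  obtain ⟨c, d, rfl⟩ := adjoin_coords hμ hzmem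
  have hb3 : a = 3 * d - 1 ∧ b = 3 * d - 3 * c := by
    have h0 : ((a - (3*d - 1) : ℤ) : ℂ) + ((b - (3*d - 3*c) : ℤ) : ℂ) * μ = 0 := by
      push_cast
      linear_combination hzeq - hJab + ((c:ℂ) + (d:ℂ) * μ - 3*(d:ℂ)) * hrel
    have := coords_zero hμ h0
    omega
  -- parity of b via the pairing argument
  have hpodd : (2 : ZMod p)⁻¹ + (2 : ZMod p)⁻¹ = 1 := by
    rw [← two_mul]
    exact mul_inv_cancel₀ h2ne
  obtain ⟨r, hrmem, hrsum⟩ := sum_parity_fixed (fun x => χ x * χ (1 - x)) (fun x => 1 - x)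
      (Algebra.adjoin ℤ {μ}) ((2 : ZMod p)⁻¹)
      (fun x => Subalgebra.mul_mem _
        (MulChar.apply_mem_algebraAdjoin_of_pow_eq_one hχ3 hμ x)
        (MulChar.apply_mem_algebraAdjoin_of_pow_eq_one hχ3 hμ (1 - x)))
      (fun x => by show (1:ZMod p) - (1 - x) = x; ring)
      (fun x => by
        show χ (1-x) * χ (1 - (1-x)) = χ x * χ (1-x)
        rw [sub_sub_cancel]; exact mul_comm _ _)
      (fun x => by
        show (1:ZMod p) - x = x ↔ x = (2:ZMod p)⁻¹
        constructor
        · intro h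
          have h2x : (2 : ZMod p) * x = 1 := by linear_combination -h
          have : x = (2 : ZMod p)⁻¹ * ((2 : ZMod p) * x) := by
            rw [← mul_assoc, inv_mul_cancel₀ h2ne, one_mul]
          rw [h2x, mul_one] at this
          exact this
        · intro h
          subst h
          linear_combination -hpodd)
  obtain ⟨e, f, rfl⟩ := adjoin_coords hμ hrmem
  have hfixval : χ (2 : ZMod p)⁻¹ * χ (1 - (2 : ZMod p)⁻¹) = 1 := by
    have h1m : (1 : ZMod p) - (2 : ZMod p)⁻¹ = (2 : ZMod p)⁻¹ := by
      linear_combination -hpodd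
    rw [h1m]
    have hinv : χ (2 : ZMod p)⁻¹ * χ 2 = 1 := by
      rw [← map_mul, inv_mul_cancel₀ h2ne, map_one]
    have : χ (2 : ZMod p)⁻¹ = 1 := by rwa [hχ2, mul_one] at hinv
    rw [this, mul_one]
  have hJsum : J = 1 + 2 * ((e:ℂ) + (f:ℂ) * μ) := by
    rw [hJdef, jacobiSum]
    rw [hrsum, hfixval]
  have hb2 : a = 1 + 2 * e ∧ b = 2 * f := by
    have h0 : ((a - (1 + 2*e) : ℤ) : ℂ) + ((b - 2*f : ℤ) : ℂ) * μ = 0 := by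
      push_cast
      linear_combination hJsum - hJab
    have := coords_zero hμ h0
    omega
  -- the norm identity
  have hχχ : χ * χ ≠ 1 := by
    intro h
    have : orderOf χ ∣ 2 := orderOf_dvd_of_pow_eq_one (by rw [pow_two]; exact h)
    rw [hχord] at this
    norm_num at this
  have hrc : ringChar ℂ ≠ ringChar (ZMod p) := by
    have h1 : ringChar ℂ = 0 := ringChar.eq_zero
    have h2 : ringChar (ZMod p) = p := ZMod.ringChar_zmod_n p
    rw [h1, h2]
    omega
  have hnorm := jacobiSum_mul_jacobiSum_inv hrc hχ1 hχ1 hχχ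
  -- J(χ⁻¹, χ⁻¹) = conj J
  have hconj : jacobiSum χ⁻¹ χ⁻¹ = (starRingEnd ℂ) J := by
    rw [hJdef, jacobiSum, jacobiSum, map_sum]
    refine Finset.sum_congr rfl fun x _ => ?_
    rw [map_mul]
    have key : ∀ y : ZMod p, χ⁻¹ y = (starRingEnd ℂ) (χ y) := by
      intro y
      by_cases hy : IsUnit y
      · have hcube : (χ y) ^ 3 = 1 := by
          rw [← χ.pow_apply' (by norm_num), hχ3, MulChar.one_apply hy]
        rw [MulChar.inv_apply_eq_inv' χ y, conj_cube_root hcube]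
        exact inv_eq_of_mul_eq_one_right (by rw [← pow_succ']; exact hcube)
      · rw [MulChar.map_nonunit _ hy, MulChar.map_nonunit χ hy, map_zero]
    rw [key, key]
  have hnormval : ((a^2 - a*b + b^2 : ℤ) : ℂ) = (p : ℂ) := by
    have hJconj : (starRingEnd ℂ) J = ((a - b : ℤ) : ℂ) + ((-b : ℤ) : ℂ) * μ := by
      have hμcube : μ ^ 3 = 1 := hμ.pow_eq_one
      have hμconj : (starRingEnd ℂ) μ = μ ^ 2 := conj_cube_root hμcube
      rw [hJab, map_add, map_mul, hμconj]
      push_cast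
      rw [map_intCast, map_intCast]
      push_cast
      linear_combination (b:ℂ) * hrel
    have hp' : (Fintype.card (ZMod p) : ℂ) = (p : ℂ) := by rw [hcard]
    rw [← hJdef, hconj, hJconj, hJab] at hnorm
    push_cast
    push_cast at hnorm
    rw [hp'] at hnorm
    linear_combination hnorm + (b:ℂ)^2 * hrel
  have hnormint : a^2 - a*b + b^2 = (p : ℤ) := by exact_mod_cast hnormval
  -- finish
  obtain ⟨hb3a, hb3b⟩ := hb3
  obtain ⟨hb2a, hb2b⟩ := hb2
  have h3b : (3:ℤ) ∣ b := ⟨d - c, by omega⟩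
  have h2b : (2:ℤ) ∣ b := ⟨f, by omega⟩
  have h6 : (6:ℤ) ∣ b := by omega
  obtain ⟨B, hB⟩ := h6
  exact ⟨a - 3*B, B, by rw [← hnormint, hB]; ring⟩

end Gauss

section Descent

lemma q_two_mod_three {q : ℕ} (hq : q.Prime) (hq2 : q % 3 = 2) (hqodd : q ≠ 2) {c d : ℤ}
    (h : (q:ℤ) ∣ c^2 + 3*d^2) : (q:ℤ) ∣ c ∧ (q:ℤ) ∣ d := by
  haveI : Fact q.Prime := ⟨hq⟩
  have hq3 : q ≠ 3 := by omega
  suffices hd : (q:ℤ) ∣ d by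
    refine ⟨?_, hd⟩
    obtain ⟨k, hk⟩ := hd
    have h2 : (q:ℤ) ∣ c^2 := by
      have : c^2 = (c^2 + 3*d^2) - (q:ℤ) * (3*q*k^2) := by rw [hk]; ring
      rw [this]
      exact dvd_sub h (Dvd.intro _ rfl)
    exact (Int.Prime.dvd_pow' hq h2)
  by_contra hd
  have hdz : (d : ZMod q) ≠ 0 := by
    rwa [Ne, ZMod.intCast_zmod_eq_zero_iff_dvd]
  have h0 : (c : ZMod q)^2 + 3*(d : ZMod q)^2 = 0 := by
    have : ((c^2 + 3*d^2 : ℤ) : ZMod q) = 0 := by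
      rwa [ZMod.intCast_zmod_eq_zero_iff_dvd]
    push_cast at this
    linear_combination this
  have h2ne : (2 : ZMod q) ≠ 0 := by
    have : ((2 : ℕ) : ZMod q) ≠ 0 := by
      rw [Ne, ZMod.natCast_eq_zero_iff]
      intro hdvd2
      have h22 := Nat.le_of_dvd (by norm_num) hdvd2
      interval_cases q <;> omega
    exact_mod_cast this
  set x : ZMod q := (c : ZMod q) * (d : ZMod q)⁻¹ with hx
  have hx2 : x^2 = -3 := by
    rw [hx]
    have hdinv : (d : ZMod q) * (d : ZMod q)⁻¹ = 1 := mul_inv_cancel₀ hdz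
    field_simp
    linear_combination h0
  set ζ : ZMod q := (x - 1) * 2⁻¹ with hζ
  have h2z : ζ * 2 = x - 1 := by
    rw [hζ, mul_assoc, inv_mul_cancel₀ h2ne, mul_one]
  have hζrel : ζ^2 + ζ + 1 = 0 := by
    have h4 : (ζ^2 + ζ + 1) * 4 = 0 := by
      linear_combination (2*ζ + x + 1)*h2z + hx2
    have h4ne : (4 : ZMod q) ≠ 0 := by
      have h42 : (4 : ZMod q) = 2 * 2 := by norm_num
      rw [h42]
      exact mul_ne_zero h2ne h2ne
    rcases mul_eq_zero.mp h4 with h | h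
    · exact h
    · exact absurd h h4ne
  have hζ3 : ζ^3 = 1 := by linear_combination (ζ - 1) * hζrel
  have hζne1 : ζ ≠ 1 := by
    intro h1
    rw [h1] at hζrel
    have h3z : (3 : ZMod q) = 0 := by linear_combination hζrel
    have : ((3:ℕ) : ZMod q) = 0 := by exact_mod_cast h3z
    rw [ZMod.natCast_eq_zero_iff] at this
    have := Nat.le_of_dvd (by norm_num) this
    interval_cases q <;> omega
  have hζne0 : ζ ≠ 0 := by
    intro h0'
    rw [h0'] at hζrel
    norm_num at hζrel
  -- ζ is a unit of order 3
  have hunit : IsUnit ζ := isUnit_iff_ne_zero.mpr hζne0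
  set u := hunit.unit with hu
  have hu3 : u^3 = 1 := by
    ext
    push_cast
    exact hζ3
  have hune : u ≠ 1 := by
    intro h1
    have hspec : (u : ZMod q) = ζ := hunit.unit_spec
    rw [h1, Units.val_one] at hspec
    exact hζne1 hspec.symm
  have hord : orderOf u = 3 := by
    have hdvd3 : orderOf u ∣ 3 := orderOf_dvd_of_pow_eq_one hu3
    rcases (Nat.Prime.eq_one_or_self_of_dvd (by norm_num) _ hdvd3) with h | h
    · exact absurd (orderOf_eq_one_iff.mp h) hune
    · exact h
  have hcard : orderOf u ∣ Fintype.card (ZMod q)ˣ := orderOf_dvd_card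
  rw [hord, ZMod.card_units_eq_totient, Nat.totient_prime hq] at hcard
  omega

end Descent

lemma descent_lemma : ∀ M : ℕ, Odd M → ¬ (3 ∣ M) → ∀ c d : ℤ, (M:ℤ) = c^2 + 3*d^2 →
    ¬ ((3:ℤ) ∣ d) →
    ∃ p : ℕ, p.Prime ∧ (p:ℤ) ∣ (M:ℤ) ∧ p % 3 = 1 ∧ ¬ ∃ A B : ℤ, (p:ℤ) = A^2 + 27*B^2 := by
  intro M
  induction M using Nat.strong_induction_on with
  | _ M ih =>
    intro hodd h3M c d hrep hd
    have hd0 : d ≠ 0 := fun h => hd (h ▸ dvd_zero 3)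
    have hd1 : 1 ≤ d^2 := by rcases hd0.lt_or_gt with h | h <;> nlinarith
    have hM0 : M ≠ 0 := by
      intro h
      rw [h] at hrep
      push_cast at hrep
      nlinarith [sq_nonneg c]
    have hM1 : M ≠ 1 := by
      intro h
      rw [h] at hrep
      push_cast at hrep
      nlinarith [sq_nonneg c]
    set q := M.minFac with hqdef
    have hq : q.Prime := Nat.minFac_prime hM1
    have hqM : q ∣ M := Nat.minFac_dvd M
    have hq2 : q ≠ 2 := by
      intro h
      rw [h] at hqM
      rcases hodd with ⟨k, hk⟩
      omega
    have hq3 : q ≠ 3 := fun h => h3M (h ▸ hqM)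
    have hqMZ : (q:ℤ) ∣ (M:ℤ) := Int.natCast_dvd_natCast.mpr hqM
    have hqmod : q % 3 = 1 ∨ q % 3 = 2 := by
      have : q % 3 ≠ 0 := by
        intro h
        have h3q : 3 ∣ q := Nat.dvd_of_mod_eq_zero h
        have := (Nat.prime_dvd_prime_iff_eq (by norm_num) hq).mp h3q
        exact hq3 this.symm
      omega
    -- get the natural quotient facts
    obtain ⟨m, hm⟩ := hqM
    have hq1le : 1 ≤ q := hq.one_lt.le.trans' (by norm_num)
    rcases hqmod with hqmod | hqmod
    · -- q ≡ 1 mod 3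
      by_cases h27 : ∃ A B : ℤ, (q:ℤ) = A^2 + 27*B^2
      · obtain ⟨A, B, hAB⟩ := h27
        have hq_rep : (q:ℤ) = A^2 + 3*(3*B)^2 := by linear_combination hAB
        have h3A : ¬ (3:ℤ) ∣ A := by
          intro ⟨k, hk⟩
          have h3q : (3:ℤ) ∣ (q:ℤ) := ⟨3*k^2 + 9*B^2, by rw [hq_rep, hk]; ring⟩
          have : (3:ℕ) ∣ q := Int.natCast_dvd_natCast.mp (by exact_mod_cast h3q)
          omega
        set e := A with he
        set f := 3*B with hf
        have key : (q:ℤ) ∣ (f*c - d*e) * (f*c + d*e) := by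
          have hid : (f*c - d*e) * (f*c + d*e) = f^2 * (M:ℤ) - d^2 * (q:ℤ) := by
            linear_combination -f^2 * hrep + d^2 * hq_rep
          rw [hid]
          exact dvd_sub (Dvd.dvd.mul_left hqMZ _) (dvd_mul_left _ _)
        obtain ⟨ε, hε1, hεdvd⟩ : ∃ ε : ℤ, ε^2 = 1 ∧ (q:ℤ) ∣ f*c - ε*(d*e) := by
          rcases (Int.Prime.dvd_mul' hq key) with hc | hc
          · exact ⟨1, by norm_num, by rw [one_mul]; exact hc⟩
          · exact ⟨-1, by norm_num, by
              have : f*c - (-1)*(d*e) = f*c + d*e := by ring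
              rw [this]; exact hc⟩
        obtain ⟨d', hd'⟩ := hεdvd
        have hMq : (M:ℤ) * q = (c*e + 3*ε*d*f)^2 + 3*(f*c - ε*(d*e))^2 := by
          linear_combination (q:ℤ) * hrep + (c^2 + 3*d^2) * hq_rep -
            (3*d^2*e^2 + 9*d^2*f^2) * hε1
        have hqsq : (q:ℤ) ∣ (c*e + 3*ε*d*f)^2 := by
          have : (c*e + 3*ε*d*f)^2 = (M:ℤ)*q - 3*((q:ℤ)*d')^2 := by
            rw [← hd']; linear_combination -hMq
          rw [this]
          refine dvd_sub (dvd_mul_left _ _) ⟨3*q*d'^2, by push_cast; ring⟩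
        have hqc' : (q:ℤ) ∣ (c*e + 3*ε*d*f) := Int.Prime.dvd_pow' hq hqsq
        obtain ⟨c', hc'⟩ := hqc'
        have hqz : (q:ℤ) ≠ 0 := by exact_mod_cast hq.ne_zero
        have hMdiv : (M:ℤ) = (q:ℤ) * (c'^2 + 3*d'^2) := by
          have h1 : (M:ℤ) * q = ((q:ℤ) * (c'^2 + 3*d'^2)) * q := by
            rw [hMq, hc', hd']; ring
          exact mul_right_cancel₀ hqz h1
        -- pass to natural quotient m
        have hmrep : (m:ℤ) = c'^2 + 3*d'^2 := by
          have hMm : (M:ℤ) = (q:ℤ) * (m:ℤ) := by exact_mod_cast hm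
          rw [hMm] at hMdiv
          exact mul_left_cancel₀ hqz hMdiv
        have hmlt : m < M := by
          have hq2' : 2 ≤ q := hq.two_le
          have hm0 : m ≠ 0 := by
            intro h
            rw [h, Nat.mul_zero] at hm
            exact hM0 hm
          calc m < q * m := by nlinarith [Nat.pos_of_ne_zero hm0]
            _ = M := hm.symm
        have hmodd : Odd m := ((Nat.odd_mul).mp (hm ▸ hodd)).2
        have h3m : ¬ (3 ∣ m) := fun h => h3M (hm ▸ Dvd.dvd.mul_left h q)
        have h3d' : ¬ ((3:ℤ) ∣ d') := by
          intro ⟨k, hk⟩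
          have h3qd : (3:ℤ) ∣ (q:ℤ)*d' := ⟨(q:ℤ)*k, by rw [hk]; ring⟩
          rw [← hd'] at h3qd
          have h3de : (3:ℤ) ∣ ε*(d*e) := by
            have : ε*(d*e) = f*c - (f*c - ε*(d*e)) := by ring
            rw [this]
            refine dvd_sub ⟨B*c, by rw [hf]; ring⟩ h3qd
          have h3' : Prime (3:ℤ) := Int.prime_three
          rcases h3'.dvd_mul.mp h3de with h | h
          · have hεpm : ε = 1 ∨ ε = -1 := by
              have h0 : (ε - 1) * (ε + 1) = 0 := by linear_combination hε1
              rcases mul_eq_zero.mp h0 with h' | h'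
              · left; omega
              · right; omega
            rcases h with ⟨k, hk⟩
            rcases hεpm with rfl | rfl <;> omega
          · rcases h3'.dvd_mul.mp h with h | h
            · exact hd h
            · exact h3A h
        obtain ⟨pp, hpp, hppdvd, hppmod, hpp27⟩ := ih m hmlt hmodd h3m c' d' hmrep h3d'
        exact ⟨pp, hpp, hppdvd.trans ⟨q, by rw [hm]; push_cast; ring⟩, hppmod, hpp27⟩
      · exact ⟨q, hq, hqMZ, hqmod, h27⟩
    · -- q ≡ 2 mod 3
      have hqcd := q_two_mod_three hq hqmod hq2 (hrep ▸ hqMZ)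
      obtain ⟨⟨c₀, hc₀⟩, ⟨d₀, hd₀⟩⟩ := hqcd
      have hq2dvd : (q:ℤ)^2 ∣ (M:ℤ) := by
        rw [hrep, hc₀, hd₀]
        exact ⟨c₀^2 + 3*d₀^2, by ring⟩
      have hq2dvdN : q^2 ∣ M := by
        have := Int.natCast_dvd_natCast.mp (by exact_mod_cast hq2dvd : ((q^2:ℕ):ℤ) ∣ (M:ℤ))
        exact this
      obtain ⟨m', hm'⟩ := hq2dvdN
      have hqz : (q:ℤ) ≠ 0 := by exact_mod_cast hq.ne_zero
      have hm'rep : (m':ℤ) = c₀^2 + 3*d₀^2 := by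
        have h1 : (q:ℤ)^2 * (m':ℤ) = (q:ℤ)^2 * (c₀^2 + 3*d₀^2) := by
          have hMm : (M:ℤ) = (q:ℤ)^2 * (m':ℤ) := by exact_mod_cast hm'
          rw [← hMm, hrep, hc₀, hd₀]; ring
        exact mul_left_cancel₀ (pow_ne_zero 2 hqz) h1
      have hm'lt : m' < M := by
        have hq2' : 2 ≤ q := hq.two_le
        have hm'0 : m' ≠ 0 := by
          intro h
          rw [h, Nat.mul_zero] at hm'
          exact hM0 hm'
        have h4q : 4 ≤ q^2 := by nlinarith
        calc m' < q^2 * m' := by nlinarith [Nat.pos_of_ne_zero hm'0]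
          _ = M := hm'.symm
      have hm'odd : Odd m' := ((Nat.odd_mul).mp (hm' ▸ hodd)).2
      have h3m' : ¬ (3 ∣ m') := fun h => h3M (hm' ▸ Dvd.dvd.mul_left h (q^2))
      have h3d₀ : ¬ ((3:ℤ) ∣ d₀) := by
        intro ⟨k, hk⟩
        exact hd ⟨(q:ℤ)*k, by rw [hd₀, hk]; ring⟩
      obtain ⟨pp, hpp, hppdvd, hppmod, hpp27⟩ := ih m' hm'lt hm'odd h3m' c₀ d₀ hm'rep h3d₀
      exact ⟨pp, hpp, hppdvd.trans ⟨(q:ℤ)^2, by rw [hm']; push_cast; ring⟩, hppmod, hpp27⟩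

theorem no_integer_solutions_2_4x3_3xy2_z3 :
    ¬ ∃ x y z : ℤ, 2 + 4 * x ^ 3 + 3 * x * y ^ 2 + z ^ 3 = 0 := by
  rintro ⟨x, y, z, h⟩
  by_cases h3x : (3:ℤ) ∣ x
  · -- case 3 ∣ x : contradiction mod 9
    obtain ⟨k, rfl⟩ := h3x
    have h9 := congrArg (Int.cast : ℤ → ZMod 9) h
    push_cast at h9
    revert h9
    have : ∀ k' y' z' : ZMod 9, 2 + 4 * (3*k')^3 + 3*(3*k')*y'^2 + z'^3 ≠ 0 := by decide
    exact this _ _ _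
  · by_cases h3y : (3:ℤ) ∣ y
    · -- case 3 ∣ y, 3 ∤ x : contradiction mod 9
      obtain ⟨j, rfl⟩ := h3y
      have h9 := congrArg (Int.cast : ℤ → ZMod 9) h
      push_cast at h9
      have hkey : ∀ a j' c : ZMod 9, (2 + 4*a^3 + 3*a*(3*j')^2 + c^3 = 0) →
          ∃ b : ZMod 9, a = 3*b := by decide
      obtain ⟨b, hb⟩ := hkey _ _ _ h9
      apply h3x
      have h0 : ((x - 3*(b.val:ℤ) : ℤ) : ZMod 9) = 0 := by
        push_cast
        rw [ZMod.natCast_val, ZMod.cast_id, hb]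
        ring
      have h9dvd := (ZMod.intCast_zmod_eq_zero_iff_dvd _ 9).mp h0
      obtain ⟨t, ht⟩ := h9dvd
      push_cast at ht
      exact ⟨b.val + 3*t, by omega⟩
    · by_cases hy2 : (2:ℤ) ∣ y
      · -- case y even : contradiction mod 4
        obtain ⟨v, rfl⟩ := hy2
        have h4 := congrArg (Int.cast : ℤ → ZMod 4) h
        push_cast at h4
        revert h4
        have : ∀ a v' c : ZMod 4, 2 + 4*a^3 + 3*a*(2*v')^2 + c^3 ≠ 0 := by decide
        exact this _ _ _
      · -- main case : y odd, 3 ∤ x, 3 ∤ y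
        set M : ℤ := 4*x^2 + 3*y^2 with hMdef
        have hMpos : 0 < M := by
          have hy0 : y ≠ 0 := fun h' => h3y (h' ▸ dvd_zero 3)
          have : 1 ≤ y^2 := by rcases hy0.lt_or_gt with h' | h' <;> nlinarith
          nlinarith [sq_nonneg x]
        set Mn : ℕ := M.toNat with hMn
        have hMnz : (Mn : ℤ) = M := Int.toNat_of_nonneg hMpos.le
        have hModd : Odd Mn := by
          rcases Int.even_or_odd y with ⟨v, hv⟩ | ⟨v, hv⟩
          · exact absurd ⟨v, by omega⟩ hy2
          · have : M = 2*(2*x^2 + 6*v^2 + 6*v + 1) + 1 := by rw [hMdef, hv]; ring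
            rcases Nat.even_or_odd Mn with ⟨w, hw⟩ | ho
            · exfalso
              have hwz : (Mn:ℤ) = (w:ℤ) + (w:ℤ) := by exact_mod_cast hw
              omega
            · exact ho
        have h3Mn : ¬ (3 ∣ Mn) := by
          intro hdvd
          apply h3x
          have h3M : (3:ℤ) ∣ M := by
            rw [← hMnz]
            exact_mod_cast hdvd
          have h3x2 : (3:ℤ) ∣ 4*x^2 := by
            have : 4*x^2 = M - 3*y^2 := by rw [hMdef]; ring
            rw [this]
            exact dvd_sub h3M ⟨y^2, by ring⟩
          have h3' : Prime (3:ℤ) := Int.prime_three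
          rcases h3'.dvd_mul.mp h3x2 with h' | h'
          · norm_num at h'
          · exact h3'.dvd_of_dvd_pow h'
        have hrep : (Mn:ℤ) = (2*x)^2 + 3*y^2 := by rw [hMnz, hMdef]; ring
        obtain ⟨p, hp, hpdvd, hpmod, hp27⟩ := descent_lemma Mn hModd h3Mn (2*x) y hrep h3y
        -- p divides z^3 + 2
        have hdvd2 : (p:ℤ) ∣ z^3 + 2 := by
          have h1 : (p:ℤ) ∣ M := hMnz ▸ hpdvd
          have h2 : x * M = -(z^3 + 2) := by rw [hMdef]; linear_combination h
          have h3 : (p:ℤ) ∣ -(z^3+2) := h2 ▸ (Dvd.dvd.mul_left h1 x)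
          exact (dvd_neg).mp h3
        haveI : Fact p.Prime := ⟨hp⟩
        have hcube : ∃ t : ZMod p, t^3 = 2 := by
          refine ⟨-(z : ZMod p), ?_⟩
          have h0 : ((z^3 + 2 : ℤ) : ZMod p) = 0 := by
            rwa [ZMod.intCast_zmod_eq_zero_iff_dvd]
          push_cast at h0
          linear_combination -h0
        exact hp27 (gauss_two_cube hpmod hcube)
end

section
/- Let x and y be nonzero integers, let n = 7x³ + 2y³, let a = v₇(n), and write n = 7^a · b with 7 ∤ b. Then either a ≡ 1 (mod 3) and b ≡ ±1 (mod 7), or a ≡ 0 (mod 3) and b ≡ ±2 (mod 7). -/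
private lemma zmod7_cube (c : ZMod 7) (hc : c ≠ 0) : c ^ 3 = 1 ∨ c ^ 3 = -1 := by
  revert hc; revert c; decide

private lemma cong_of_cast7 (b c : ℤ) (h : (b : ZMod 7) = (c : ZMod 7)) :
    b ≡ c [ZMOD 7] := by
  have h0 : ((b - c : ℤ) : ZMod 7) = 0 := by push_cast; rw [h]; ring
  have hd : ((7 : ℕ) : ℤ) ∣ b - c := (ZMod.intCast_zmod_eq_zero_iff_dvd (b - c) 7).mp h0
  have hd' : (7 : ℤ) ∣ b - c := by exact_mod_cast hd
  simp only [Int.ModEq]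
  omega

theorem aux_residue : ∀ (x y : ℤ), x ≠ 0 → y ≠ 0 → ∀ (a : ℕ) (b : ℤ),
    7 * x ^ 3 + 2 * y ^ 3 = 7 ^ a * b → ¬ (7 : ℤ) ∣ b →
    (a % 3 = 1 ∧ (b ≡ 1 [ZMOD 7] ∨ b ≡ -1 [ZMOD 7])) ∨
    (a % 3 = 0 ∧ (b ≡ 2 [ZMOD 7] ∨ b ≡ -2 [ZMOD 7])) := by
  intro x y hx hy a b hb hb7
  by_cases h7y : (7 : ℤ) ∣ y
  · obtain ⟨y', rfl⟩ := h7y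
    have hy' : y' ≠ 0 := by rintro rfl; simp at hy
    by_cases h7x : (7 : ℤ) ∣ x
    · -- both divisible: recurse
      obtain ⟨x', rfl⟩ := h7x
      have hx' : x' ≠ 0 := by rintro rfl; simp at hx
      have key : (343 : ℤ) * (7 * x' ^ 3 + 2 * y' ^ 3) = 7 ^ a * b := by linarith [hb]
      have ha3 : 3 ≤ a := by
        by_contra h
        push_neg at h
        apply hb7
        have h1 : (7 : ℤ) ^ (a + 1) ∣ 7 ^ a * b := by
          rw [← key]
          exact dvd_mul_of_dvd_left (by
            have : a + 1 ≤ 3 := by omega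
            calc (7:ℤ)^(a+1) ∣ 7^3 := pow_dvd_pow 7 this
            _ = 343 := by norm_num) _
        rw [pow_succ] at h1
        exact (mul_dvd_mul_iff_left (pow_ne_zero a (by norm_num : (7:ℤ) ≠ 0))).mp h1
      obtain ⟨c, rfl⟩ : ∃ c, a = c + 3 := ⟨a - 3, by omega⟩
      have key2 : 7 * x' ^ 3 + 2 * y' ^ 3 = 7 ^ c * b := by
        have h343 : (343 : ℤ) ≠ 0 := by norm_num
        apply mul_left_cancel₀ h343
        rw [key, pow_add]
        ring
      have ih := aux_residue x' y' hx' hy' c b key2 hb7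
      have hm : c % 3 = (c + 3) % 3 := by omega
      rw [hm] at ih
      exact ih
    · -- a = 1 case
      have key : (7 : ℤ) * (x ^ 3 + 98 * y' ^ 3) = 7 ^ a * b := by linarith [hb]
      have ha1 : a = 1 := by
        by_contra h
        rcases Nat.lt_or_ge a 1 with h1 | h1
        · interval_cases a
          apply hb7
          rw [pow_zero, one_mul] at key
          exact ⟨x ^ 3 + 98 * y' ^ 3, key.symm⟩
        · have h2 : 2 ≤ a := by omega
          have h49 : (49 : ℤ) ∣ 7 ^ a * b :=
            dvd_mul_of_dvd_left (by calc (49:ℤ) = 7^2 := by norm_num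
                                      _ ∣ 7^a := pow_dvd_pow 7 h2) _
          rw [← key] at h49
          have h7m : (7 : ℤ) ∣ x ^ 3 + 98 * y' ^ 3 := by
            obtain ⟨d, hd⟩ := h49; exact ⟨d, by linarith⟩
          have h7x3 : (7 : ℤ) ∣ x ^ 3 := by
            obtain ⟨d, hd⟩ := h7m; exact ⟨d - 14 * y' ^ 3, by linarith⟩
          exact h7x (Int.Prime.dvd_pow' (by norm_num) h7x3)
      subst ha1
      have hbe : b = x ^ 3 + 98 * y' ^ 3 := by
        have h7 : (7 : ℤ) * (x ^ 3 + 98 * y' ^ 3) = 7 * b := by rw [key]; ring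
        linarith [mul_left_cancel₀ (by norm_num : (7:ℤ) ≠ 0) h7]
      left
      refine ⟨rfl, ?_⟩
      have hcast : (b : ZMod 7) = (x : ZMod 7) ^ 3 := by
        rw [hbe]; push_cast
        rw [show (98 : ZMod 7) = 0 by decide]
        ring
      have hxz : (x : ZMod 7) ≠ 0 := by
        rw [Ne, ZMod.intCast_zmod_eq_zero_iff_dvd]
        exact_mod_cast h7x
      rcases zmod7_cube _ hxz with h | h
      · exact Or.inl (cong_of_cast7 b 1 (by rw [hcast, h]; push_cast; ring))
      · exact Or.inr (cong_of_cast7 b (-1) (by rw [hcast, h]; push_cast; ring))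
  · -- a = 0 case
    have ha0 : a = 0 := by
      by_contra h
      have h1 : 1 ≤ a := by omega
      apply h7y
      have h7n : (7 : ℤ) ∣ 7 ^ a * b :=
        dvd_mul_of_dvd_left (by calc (7:ℤ) = 7^1 := by ring
                                  _ ∣ 7^a := pow_dvd_pow 7 h1) _
      rw [← hb] at h7n
      have h7y3 : (7 : ℤ) ∣ y ^ 3 := by
        obtain ⟨d, hd⟩ := h7n
        have h2 : (7:ℤ) ∣ 2 * y ^ 3 := ⟨d - x ^ 3, by linarith⟩
        rcases (Int.Prime.dvd_mul' (by norm_num) h2) with h | h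
        · norm_num at h
        · exact h
      exact Int.Prime.dvd_pow' (by norm_num) h7y3
    subst ha0
    rw [pow_zero, one_mul] at hb
    right
    refine ⟨rfl, ?_⟩
    have hcast : (b : ZMod 7) = 2 * (y : ZMod 7) ^ 3 := by
      rw [← hb]; push_cast
      rw [show (7 : ZMod 7) = 0 by decide]
      ring
    have hyz : (y : ZMod 7) ≠ 0 := by
      rw [Ne, ZMod.intCast_zmod_eq_zero_iff_dvd]
      exact_mod_cast h7y
    rcases zmod7_cube _ hyz with h | h
    · exact Or.inl (cong_of_cast7 b 2 (by rw [hcast, h]; push_cast; ring))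
    · exact Or.inr (cong_of_cast7 b (-2) (by rw [hcast, h]; push_cast; ring))
termination_by x y _ _ _ _ _ _ => y.natAbs
decreasing_by
  subst_vars
  have h7 : (7 * y').natAbs = 7 * y'.natAbs := by
    rw [Int.natAbs_mul]; rfl
  have := Int.natAbs_pos.mpr hy'
  omega

theorem residue_of_unit_part (x y : ℤ) (hx : x ≠ 0) (hy : y ≠ 0)
    (n : ℤ) (hn : n = 7 * x ^ 3 + 2 * y ^ 3)
    (a : ℕ) (ha : a = padicValInt 7 n)
    (b : ℤ) (hb : n = 7 ^ a * b) (hb7 : ¬ (7 : ℤ) ∣ b) :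
    (a % 3 = 1 ∧ (b ≡ 1 [ZMOD 7] ∨ b ≡ -1 [ZMOD 7])) ∨
    (a % 3 = 0 ∧ (b ≡ 2 [ZMOD 7] ∨ b ≡ -2 [ZMOD 7])) := by
  exact aux_residue x y hx hy a b (by rw [← hn, hb]) hb7
end

section
/- Let z be an integer not divisible by 3 and let a be a natural number such that 3z² + 1 = 7^a. Then a ≡ 2 (mod 3). -/
theorem power_of_seven_case (z : ℤ) (hz : ¬ (3 : ℤ) ∣ z) (a : ℕ)
    (h : 3 * z ^ 2 + 1 = 7 ^ a) : a % 3 = 2 := by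
  have hsq : z ^ 2 % 9 = (z % 9) * (z % 9) % 9 := by
    rw [pow_two, Int.mul_emod]
  have hr : z % 9 = 1 ∨ z % 9 = 2 ∨ z % 9 = 4 ∨ z % 9 = 5 ∨ z % 9 = 7 ∨ z % 9 = 8 := by
    omega
  have h4 : (3 * z ^ 2 + 1) % 9 = 4 := by
    have : z ^ 2 % 9 = 1 ∨ z ^ 2 % 9 = 4 ∨ z ^ 2 % 9 = 7 := by
      rcases hr with h' | h' | h' | h' | h' | h' <;> rw [hsq, h'] <;> norm_num
    omega
  have key : (7 : ℤ) ^ a % 9 = 7 ^ (a % 3) % 9 := by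
    have step : (7 : ℤ) ^ a ≡ 7 ^ (a % 3) [ZMOD 9] := by
      conv_lhs => rw [← Nat.div_add_mod a 3]
      rw [pow_add, pow_mul]
      calc ((7:ℤ)^3)^(a/3) * 7^(a%3)
          ≡ 1^(a/3) * 7^(a%3) [ZMOD 9] :=
            Int.ModEq.mul (Int.ModEq.pow _ (by decide)) (Int.ModEq.refl _)
        _ = 7^(a%3) := by ring
    exact step
  rw [h, key] at h4
  have hlt : a % 3 < 3 := Nat.mod_lt _ (by norm_num)
  interval_cases h' : a % 3 <;> simp_all
end

section
/- Let z be an even integer and set α = 1 + z + 2zω and ᾱ = 1 − z − 2zω (the conjugate of α) in ℤ[ω]. Then every common divisor of α and ᾱ in ℤ[ω] is a unit; that is, α and ᾱ are coprime in ℤ[ω]. -/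
open Polynomial

/-- The ring of Eisenstein integers ℤ[ω] = ℤ[X]/(X² + X + 1). -/
abbrev Eisenstein : Type := AdjoinRoot (X ^ 2 + X + 1 : ℤ[X])

/-- ω, a primitive cube root of unity, satisfying ω² + ω + 1 = 0. -/
noncomputable def ω : Eisenstein := AdjoinRoot.root _

theorem alpha_coprime_conj (z : ℤ) (hz : Even z) :
    ∀ d : Eisenstein,
      d ∣ (1 + (z : Eisenstein) + 2 * (z : Eisenstein) * ω) →
      d ∣ (1 - (z : Eisenstein) - 2 * (z : Eisenstein) * ω) →
      IsUnit d := by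
  obtain ⟨k, hk⟩ := hz
  subst hk
  intro d hα hβ
  have hω : ω ^ 2 + ω + 1 = 0 := by
    have := AdjoinRoot.isRoot_root (X ^ 2 + X + 1 : ℤ[X])
    simpa [IsRoot, ω] using this
  set α : Eisenstein := 1 + ((k + k : ℤ) : Eisenstein) + 2 * ((k + k : ℤ) : Eisenstein) * ω
  set β : Eisenstein := 1 - ((k + k : ℤ) : Eisenstein) - 2 * ((k + k : ℤ) : Eisenstein) * ω
  have key : (β - 6 * (k : Eisenstein) ^ 2) * α + (-(6 * (k : Eisenstein) ^ 2)) * β = 1 := by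
    simp only [α, β]
    push_cast
    linear_combination (-16 * (k : Eisenstein) ^ 2) * hω
  have : d ∣ 1 := key ▸ dvd_add (hα.mul_left _) (hβ.mul_left _)
  exact isUnit_of_dvd_one this
end

section
/- Let z be an integer with z ≡ 3 (mod 7), and set α = 1 + z + 2zω and ρ = 2 + 3ω in ℤ[ω]. Then for every natural number r, ρ^r divides α in ℤ[ω] if and only if 7^r divides 3z² + 1 in ℤ. -/
open Polynomial

/-!
The prime ρ = 2 + 3ω has norm ρ · conj ρ = 7, and α = 1 + z + 2zω has norm α · conj α = 3z² + 1.
If ρ ^ r ∣ α then 7 ^ r = (ρ · conj ρ) ^ r ∣ α · conj α, and divisibility between rational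
integers descends from ℤ[ω] to ℤ. Conversely, ℤ[ω]/(ρ) ≅ 𝔽₇ via ω ↦ 4, which sends conj α to
1 + 5z ≡ 2 when z ≡ 3 (mod 7); so ρ ^ r is coprime to conj α, and ρ ^ r ∣ 7 ^ r ∣ α · conj α
forces ρ ^ r ∣ α.
-/

local notation "ρ" => (2 : Eisenstein) + 3 * ω

namespace Eisenstein

theorem omega_sq_add_omega_add_one : ω ^ 2 + ω + 1 = 0 := by
  have h := AdjoinRoot.mk_self (f := (X ^ 2 + X + 1 : ℤ[X]))
  simp only [map_add, map_pow, map_one, AdjoinRoot.mk_X] at h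
  exact h

theorem exists_eq_intCast_add_intCast_mul_omega (x : Eisenstein) :
    ∃ a b : ℤ, x = a + b * ω := by
  have hx : x ∈ Algebra.adjoin ℤ {ω} := by
    rw [ω, AdjoinRoot.adjoinRoot_eq_top]; trivial
  induction hx using Algebra.adjoin_induction with
  | mem x hx => exact ⟨0, 1, by rw [Set.mem_singleton_iff.mp hx]; simp⟩
  | algebraMap n => exact ⟨n, 0, by simp⟩
  | add x y _ _ hx hy =>
    obtain ⟨a, b, rfl⟩ := hx
    obtain ⟨c, d, rfl⟩ := hy
    exact ⟨a + c, b + d, by push_cast; ring⟩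
  | mul x y _ _ hx hy =>
    obtain ⟨a, b, rfl⟩ := hx
    obtain ⟨c, d, rfl⟩ := hy
    exact ⟨a * c - b * d, a * d + b * c - b * d, by
      push_cast; linear_combination (b * d : Eisenstein) * omega_sq_add_omega_add_one⟩

theorem intCast_add_intCast_mul_omega_eq_zero {a b : ℤ} (h : (a : Eisenstein) + b * ω = 0) :
    a = 0 ∧ b = 0 := by
  have hmonic : (X ^ 2 + X + 1 : ℤ[X]).Monic := by monicity!
  have hp : C b * X + C a = 0 := by
    by_contra hne
    refine AdjoinRoot.mk_ne_zero_of_degree_lt hmonic hne ?_ (by simpa [ω, add_comm] using h)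
    calc (C b * X + C a).degree ≤ 1 := degree_linear_le
      _ < (2 : WithBot ℕ) := by norm_num
      _ = (X ^ 2 + X + 1 : ℤ[X]).degree := by symm; compute_degree!
  have h0 := congrArg (coeff · 0) hp
  have h1 := congrArg (coeff · 1) hp
  simp only [coeff_add, coeff_C_mul_X, coeff_C, coeff_zero] at h0 h1
  simpa using And.intro h0 h1

theorem intCast_dvd_intCast {m n : ℤ} : (m : Eisenstein) ∣ n ↔ m ∣ n := by
  refine ⟨fun ⟨x, hx⟩ => ?_, Int.cast_dvd_cast m n⟩
  obtain ⟨a, b, rfl⟩ := exists_eq_intCast_add_intCast_mul_omega x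
  have h : ((n - m * a : ℤ) : Eisenstein) + (-(m * b) : ℤ) * ω = 0 := by
    push_cast; rw [hx]; ring
  exact ⟨a, by linarith [(intCast_add_intCast_mul_omega_eq_zero h).1]⟩

noncomputable def conj : Eisenstein →+* Eisenstein :=
  AdjoinRoot.lift (Int.castRingHom _) (-1 - ω) <| by
    simp only [eval₂_add, eval₂_pow, eval₂_X, eval₂_one]
    linear_combination omega_sq_add_omega_add_one

theorem conj_omega : conj ω = -1 - ω := AdjoinRoot.lift_root _

theorem mul_conj (a b : ℤ) :
    (a + b * ω) * conj (a + b * ω) = ((a ^ 2 - a * b + b ^ 2 : ℤ) : Eisenstein) := by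
  simp only [map_add, map_mul, map_intCast, conj_omega]
  push_cast
  linear_combination (-(b : Eisenstein) ^ 2) * omega_sq_add_omega_add_one

noncomputable def modRho : Eisenstein →+* ZMod 7 :=
  AdjoinRoot.lift (Int.castRingHom _) 4 <| by
    simp only [eval₂_add, eval₂_pow, eval₂_X, eval₂_one]
    decide

theorem modRho_omega : modRho ω = 4 := AdjoinRoot.lift_root _

theorem rho_mul_conj_rho : ρ * conj ρ = 7 := by
  simpa using mul_conj 2 3

theorem rho_dvd_iff_modRho_eq_zero (x : Eisenstein) : ρ ∣ x ↔ modRho x = 0 := by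
  constructor
  · rintro ⟨y, rfl⟩
    rw [map_mul, map_add, map_mul, modRho_omega]
    have h14 : (2 + 3 * 4 : ZMod 7) = 0 := by decide
    simp only [map_ofNat, h14, zero_mul]
  · intro hx
    obtain ⟨a, b, rfl⟩ := exists_eq_intCast_add_intCast_mul_omega x
    obtain ⟨m, hm⟩ : (7 : ℤ) ∣ a + 4 * b := by
      refine (ZMod.intCast_zmod_eq_zero_iff_dvd _ 7).mp ?_
      simpa [modRho_omega, mul_comm] using hx
    have ha : (a : Eisenstein) = 7 * m - 4 * b := by
      rw [show a = 7 * m - 4 * b by omega]; push_cast; ring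
    refine ⟨conj ρ * m + b * (1 + 2 * ω), ?_⟩
    rw [ha]
    linear_combination (m : Eisenstein) * rho_mul_conj_rho.symm
      - 6 * (b : Eisenstein) * omega_sq_add_omega_add_one

theorem isCoprime_rho_of_modRho_ne_zero {x : Eisenstein} (hx : modRho x ≠ 0) : IsCoprime ρ x := by
  have : Fact (Nat.Prime 7) := ⟨by norm_num⟩
  obtain ⟨y, hy⟩ : ρ ∣ x ^ 6 - 1 := by
    rw [rho_dvd_iff_modRho_eq_zero, map_sub, map_pow, map_one,
      ZMod.pow_card_sub_one_eq_one hx, sub_self]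
  exact ⟨-y, x ^ 5, by linear_combination hy⟩

end Eisenstein

open Eisenstein in
theorem rho_pow_dvd_alpha_iff (z : ℤ) (hz : z ≡ 3 [ZMOD 7]) :
    ∀ r : ℕ,
      ((2 : Eisenstein) + 3 * ω) ^ r ∣ (1 + (z : Eisenstein) + 2 * (z : Eisenstein) * ω) ↔
      (7 : ℤ) ^ r ∣ 3 * z ^ 2 + 1 := by
  intro r
  set α := 1 + (z : Eisenstein) + 2 * (z : Eisenstein) * ω
  have hnorm : α * conj α = ((3 * z ^ 2 + 1 : ℤ) : Eisenstein) := by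
    have := mul_conj (1 + z) (2 * z)
    push_cast at this ⊢
    linear_combination this
  have hseven : (((7 : ℤ) ^ r : ℤ) : Eisenstein) = ρ ^ r * conj ρ ^ r := by
    rw [← mul_pow, rho_mul_conj_rho]; push_cast; rfl
  have hres : modRho (conj α) ≠ 0 := by
    have hz' : (z : ZMod 7) = 3 := by simpa using (ZMod.intCast_eq_intCast_iff _ _ _).mpr hz
    simp only [α, map_add, map_mul, map_one, map_ofNat, map_intCast, conj_omega, map_sub,
      map_neg, modRho_omega, hz']
    decide
  rw [← intCast_dvd_intCast, hseven, ← hnorm]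
  constructor
  · intro h
    exact mul_dvd_mul h (by simpa using map_dvd conj h)
  · intro h
    exact ((isCoprime_rho_of_modRho_ne_zero hres).pow_left).dvd_of_dvd_mul_right
      ((dvd_mul_right _ _).trans h)
end

section
/- Let p be a prime element of ℤ[ω] that does not divide 14, and suppose there is no t ∈ ℤ[ω] with p dividing t³ − 28 (i.e., 28 is not a cube modulo p). Then for all integers x and y with 7x³ + 2y³ ≠ 0, the multiplicity of p in 7x³ + 2y³ (viewed in ℤ[ω]) is divisible by 3; that is, if e is the largest natural number with p^e dividing 7x³ + 2y³ in ℤ[ω], then 3 divides e. -/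
open Polynomial

/-!
If `p ∣ a x³ + b y³` and `p ∤ y`, then `t = a x² / y²` satisfies `t³ = a (a x³)² / y⁶ ≡ a b²`
modulo `p`. So when `a b²` is not a cube modulo `p` (and `p ∤ a`), `p` divides both `x` and `y`,
and `a x³ + b y³ = p³ (a x₁³ + b y₁³)`; descending on the exponent shows that the multiplicity
of `p` is a multiple of `3`. Inverting `y` modulo `p` needs `(p)` to be maximal, which holds in
`ℤ[ω]` because it is integral over `ℤ` and so has dimension one.
-/

open Ideal

section AddCubes

variable {R : Type*} [CommRing R]

theorem exists_mul_sub_one_dvd {p y : R} (hp : (span {p}).IsMaximal) (hy : ¬ p ∣ y) :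
    ∃ z, p ∣ y * z - 1 := by
  obtain ⟨z, i, hi, hzi⟩ := hp.exists_inv (mt mem_span_singleton.1 hy)
  refine ⟨z, ?_⟩
  rw [show y * z - 1 = -i by rw [← hzi]; ring, dvd_neg]
  exact mem_span_singleton.1 hi

theorem dvd_cube_sub_of_dvd_add_cubes {p a b x y z : R} (hxy : p ∣ a * x ^ 3 + b * y ^ 3)
    (hz : p ∣ y * z - 1) : p ∣ (a * x ^ 2 * z ^ 2) ^ 3 - a * b ^ 2 := by
  have hz6 : p ∣ (y * z) ^ 6 - 1 := hz.trans (sub_one_dvd_pow_sub_one _ 6)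
  have key : (a * x ^ 2 * z ^ 2) ^ 3 - a * b ^ 2 =
      a * z ^ 6 * (a * x ^ 3 - b * y ^ 3) * (a * x ^ 3 + b * y ^ 3)
        + a * b ^ 2 * ((y * z) ^ 6 - 1) := by ring
  rw [key]
  exact dvd_add (hxy.mul_left _) (hz6.mul_left _)

variable [IsDomain R] [Ring.KrullDimLE 1 R] {p a b : R}

theorem dvd_and_dvd_of_dvd_add_cubes (hp : Prime p) (ha : ¬ p ∣ a)
    (hab : ¬ ∃ t, p ∣ t ^ 3 - a * b ^ 2) {x y : R} (hxy : p ∣ a * x ^ 3 + b * y ^ 3) :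
    p ∣ x ∧ p ∣ y := by
  have hy : p ∣ y := by
    by_contra hy
    obtain ⟨z, hz⟩ := exists_mul_sub_one_dvd hp.isMaximal_span_singleton hy
    exact hab ⟨_, dvd_cube_sub_of_dvd_add_cubes hxy hz⟩
  have hax : p ∣ a * x ^ 3 := by
    simpa using dvd_sub hxy ((hy.pow three_ne_zero).mul_left b)
  exact ⟨hp.dvd_of_dvd_pow ((hp.dvd_mul.1 hax).resolve_left ha), hy⟩

theorem exists_add_cubes_eq_pow_three_mul (hp : Prime p) (ha : ¬ p ∣ a)
    (hab : ¬ ∃ t, p ∣ t ^ 3 - a * b ^ 2) {x y : R} (hxy : p ∣ a * x ^ 3 + b * y ^ 3) :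
    ∃ x₁ y₁, a * x ^ 3 + b * y ^ 3 = p ^ 3 * (a * x₁ ^ 3 + b * y₁ ^ 3) := by
  obtain ⟨⟨x₁, rfl⟩, ⟨y₁, rfl⟩⟩ := dvd_and_dvd_of_dvd_add_cubes hp ha hab hxy
  exact ⟨x₁, y₁, by ring⟩

theorem three_dvd_of_pow_dvd_add_cubes (hp : Prime p) (ha : ¬ p ∣ a)
    (hab : ¬ ∃ t, p ∣ t ^ 3 - a * b ^ 2) :
    ∀ (e : ℕ) (x y : R), p ^ e ∣ a * x ^ 3 + b * y ^ 3 →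
      ¬ p ^ (e + 1) ∣ a * x ^ 3 + b * y ^ 3 → 3 ∣ e
  | 0, _, _, _, _ => dvd_zero 3
  | e + 3, x, y, he, he₁ => by
    obtain ⟨x₁, y₁, hxy⟩ :=
      exists_add_cubes_eq_pow_three_mul hp ha hab ((dvd_pow_self p (by omega)).trans he)
    have hcancel (n : ℕ) : p ^ (n + 3) ∣ p ^ 3 * (a * x₁ ^ 3 + b * y₁ ^ 3) ↔
        p ^ n ∣ a * x₁ ^ 3 + b * y₁ ^ 3 := by
      rw [pow_add, mul_comm, mul_dvd_mul_iff_left (pow_ne_zero 3 hp.ne_zero)]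
    rw [hxy, hcancel] at he
    rw [hxy, add_right_comm, hcancel] at he₁
    exact Nat.dvd_add_self_right.2 (three_dvd_of_pow_dvd_add_cubes hp ha hab e x₁ y₁ he he₁)
  | 1, _, _, he, he₁ | 2, _, _, he, he₁ => by
    obtain ⟨x₁, y₁, hxy⟩ :=
      exists_add_cubes_eq_pow_three_mul hp ha hab ((dvd_pow_self p (by omega)).trans he)
    exact absurd ((pow_dvd_pow p (by omega)).trans (hxy ▸ dvd_mul_right _ _)) he₁

end AddCubes

instance : IsDomain Eisenstein :=
  AdjoinRoot.isDomain_of_prime <| cyclotomic_three ℤ ▸ (cyclotomic.irreducible three_pos).prime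

instance : Module.Finite ℤ Eisenstein :=
  (cyclotomic_three ℤ ▸ cyclotomic.monic 3 ℤ).finite_adjoinRoot

instance : Ring.DimensionLEOne Eisenstein :=
  .of_isIntegral ℤ Eisenstein

theorem multiplicity_divisible_by_three (p : Eisenstein) (hp : Prime p)
    (h14 : ¬ p ∣ 14) (h28 : ¬ ∃ t : Eisenstein, p ∣ t ^ 3 - 28) :
    ∀ x y : ℤ, 7 * x ^ 3 + 2 * y ^ 3 ≠ 0 →
      ∀ e : ℕ,
        p ^ e ∣ ((7 * x ^ 3 + 2 * y ^ 3 : ℤ) : Eisenstein) →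
        ¬ p ^ (e + 1) ∣ ((7 * x ^ 3 + 2 * y ^ 3 : ℤ) : Eisenstein) →
        3 ∣ e := by
  intro x y _ e
  have h7 : ¬ p ∣ 7 := fun h ↦ h14 (h.trans ⟨2, by norm_num⟩)
  have h28_cube : ¬ ∃ t : Eisenstein, p ∣ t ^ 3 - 7 * 2 ^ 2 := by norm_num [h28]
  push_cast
  exact three_dvd_of_pow_dvd_add_cubes hp h7 h28_cube e x y
end
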